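/- arXiv:1605.02121 — 3 statements merged into one kernel-verified Lean document; each statement's English description precedes it below -/
import Mathlib

section
/- Let D^‡ be the N×N matrix satisfying (D^‡ p)_i = ṗ(τ_i) for 1 ≤ i < N and (D^‡ p)_N = ṗ(τ_N) - p(τ_N)/ω_N for every polynomial p of degree at most N-1, where p is the vector of values p(τ_i), 1 ≤ i ≤ N, τ_N is the right endpoint, and ω_N > 0. Then D^‡ is invertible. -/
/-!
If `D^‡` killed the value vector of an interpolant `p` with `deg p ≤ N - 1`, then `ṗ` would have
degree `< N - 1` and vanish at the `N - 1` nodes `τ_1, …, τ_{N-1}`, so `p` would be a constant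
`c`; the last row then reads `0 = -c / ω_N`, hence `c = 0` and the value vector is zero.
-/

open Polynomial Finset

namespace Polynomial

variable {ι : Type*}

theorem derivative_eq_zero_of_eval_derivative_eq_zero {R : Type*} [CommRing R] [IsDomain R]
    {s : Finset ι} {v : ι → R} (hvs : Set.InjOn v s) {p : R[X]} (hp : p.natDegree ≤ #s)
    (hs : ∀ i ∈ s, (derivative p).eval (v i) = 0) : derivative p = 0 := by
  refine eq_zero_of_degree_lt_of_eval_index_eq_zero s hvs ?_ hs
  rcases eq_or_ne p 0 with rfl | hp0
  · simp
  · calc (derivative p).degree < p.degree := degree_derivative_lt hp0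
      _ ≤ #s := degree_le_of_natDegree_le hp

variable {F : Type*} [Field F]

theorem eq_zero_of_eval_derivative_eq_zero_of_eval_derivative_eq_div [CharZero F]
    {s : Finset ι} {v : ι → F} (hvs : Set.InjOn v s) {p : F[X]} (hp : p.natDegree ≤ #s)
    (hs : ∀ i ∈ s, (derivative p).eval (v i) = 0) {t ω : F} (hω : ω ≠ 0)
    (ht : (derivative p).eval t = p.eval t / ω) : p = 0 := by
  rw [eq_C_of_derivative_eq_zero (derivative_eq_zero_of_eval_derivative_eq_zero hvs hp hs)]
    at ht ⊢
  simpa [eq_comm (a := (0 : F)), hω] using ht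

theorem exists_natDegree_le_eval_eq [Fintype ι] {v : ι → F} (hv : Function.Injective v)
    (y : ι → F) : ∃ p : F[X], p.natDegree ≤ Fintype.card ι - 1 ∧ ∀ i, p.eval (v i) = y i := by
  classical
  have hvs : Set.InjOn v (univ : Finset ι) := hv.injOn
  refine ⟨Lagrange.interpolate univ v y, ?_,
    fun i ↦ Lagrange.eval_interpolate_at_node y hvs (mem_univ i)⟩
  have hdeg := Lagrange.degree_interpolate_lt y hvs
  rw [card_univ] at hdeg
  rcases eq_or_ne (Lagrange.interpolate univ v y) 0 with h0 | h0
  · simp [h0]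
  · have := (natDegree_lt_iff_degree_lt h0).2 hdeg
    omega

end Polynomial

theorem stmt2_general (N : ℕ) (τ : Fin N → ℝ) (hτ : StrictMono τ)
    (ωN : ℝ) (hω : 0 < ωN)
    (Ddag : Matrix (Fin N) (Fin N) ℝ)
    (hD : ∀ p : Polynomial ℝ, p.natDegree ≤ N - 1 → ∀ i : Fin N,
      Ddag.mulVec (fun j => p.eval (τ j)) i =
        (Polynomial.derivative p).eval (τ i) -
          (if (i : ℕ) = N - 1 then p.eval (τ i) / ωN else 0)) :
    IsUnit Ddag := by
  rw [← Matrix.mulVec_injective_iff_isUnit]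
  refine (injective_iff_map_eq_zero Ddag.mulVecLin).2 fun x hx ↦ funext fun j ↦ ?_
  obtain ⟨p, hp_deg, hp_eval⟩ := exists_natDegree_le_eval_eq hτ.injective x
  rw [Fintype.card_fin] at hp_deg
  have hrow (i : Fin N) : (derivative p).eval (τ i) =
      if (i : ℕ) = N - 1 then p.eval (τ i) / ωN else 0 := by
    have := hD p hp_deg i
    rw [funext hp_eval, show Ddag.mulVec x = 0 from hx, Pi.zero_apply, eq_comm, sub_eq_zero]
      at this
    exact this
  let last : Fin N := ⟨N - 1, Nat.sub_one_lt_of_lt j.isLt⟩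
  have hp : p = 0 := by
    refine eq_zero_of_eval_derivative_eq_zero_of_eval_derivative_eq_div (s := univ.erase last)
      hτ.injective.injOn ?_ (fun i hi ↦ ?_) hω.ne' ((hrow last).trans (if_pos rfl))
    · simpa [card_erase_of_mem] using hp_deg
    · rw [hrow i, if_neg (Fin.val_ne_of_ne (ne_of_mem_erase hi))]
  rw [← hp_eval j, hp, eval_zero, Pi.zero_apply]

/-- The matrix `D^‡`, acting on value vectors of polynomials `p` of degree at most `N-1` by
`(D^‡ p)_i = ṗ(τ_i)` for `i < N` and `(D^‡ p)_N = ṗ(τ_N) - p(τ_N)/ω_N`, is invertible. -/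
theorem stmt2 (N : ℕ) (hN : 0 < N) (τ : Fin N → ℝ) (hτ : StrictMono τ)
    (ωN : ℝ) (hω : 0 < ωN)
    (Ddag : Matrix (Fin N) (Fin N) ℝ)
    (hD : ∀ p : Polynomial ℝ, p.natDegree ≤ N - 1 → ∀ i : Fin N,
      Ddag.mulVec (fun j => p.eval (τ j)) i =
        (Polynomial.derivative p).eval (τ i) -
          (if (i : ℕ) = N - 1 then p.eval (τ i) / ωN else 0)) :
    IsUnit Ddag :=
  stmt2_general N τ hτ ωN hω Ddag hD
end

section
/- With D^‡ as defined (acting on value vectors of polynomials p of degree at most N-1 by (D^‡p)_i = ṗ(τ_i) for i < N and (D^‡p)_N = ṗ(τ_N) - p(τ_N)/ω_N), applying D^‡ to the constant polynomial 1 gives D^‡ 1 = -e_N/ω_N, and hence (D^‡)^{-1} e_N = -ω_N 1, i.e., every entry of the last column of (D^‡)^{-1} equals -ω_N. -/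
open Polynomial Matrix

theorem stmt3_general (N : ℕ) (τ : Fin N → ℝ)
    (ωN : ℝ) (hω : 0 < ωN)
    (Ddag : Matrix (Fin N) (Fin N) ℝ) (hInv : IsUnit Ddag.det)
    (hD : ∀ p : Polynomial ℝ, p.natDegree ≤ N - 1 → ∀ i : Fin N,
      Ddag.mulVec (fun j => p.eval (τ j)) i =
        (Polynomial.derivative p).eval (τ i) -
          (if (i : ℕ) = N - 1 then p.eval (τ i) / ωN else 0)) :
    (Ddag.mulVec (fun _ => (1 : ℝ)) =
      fun i : Fin N => if (i : ℕ) = N - 1 then -(1 / ωN) else 0) ∧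
    (Ddag⁻¹.mulVec (fun i : Fin N => if (i : ℕ) = N - 1 then (1 : ℝ) else 0) =
      fun _ : Fin N => -ωN) := by
  have hOne : Ddag *ᵥ (fun _ => (1 : ℝ)) =
      fun i : Fin N => if (i : ℕ) = N - 1 then -(1 / ωN) else 0 := by
    funext i
    have hD1 := hD 1 (by simp) i
    simp only [eval_one, derivative_one, eval_zero] at hD1
    rw [hD1]
    split_ifs <;> simp
  refine ⟨hOne, ?_⟩
  let _ := Ddag.invertibleOfIsUnitDet hInv
  refine inv_mulVec_eq_vec ?_
  have hconst : (fun _ : Fin N => -ωN) = (-ωN) • fun _ : Fin N => (1 : ℝ) :=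
    funext fun _ => (mul_one _).symm
  rw [hconst, mulVec_smul, hOne]
  funext i
  split_ifs with hi <;> simp [hi, hω.ne']

/-- Applying `D^‡` to the constant polynomial 1 gives `D^‡ 1 = -e_N/ω_N`, and hence
`(D^‡)⁻¹ e_N = -ω_N 1`, i.e. every entry of the last column of `(D^‡)⁻¹` equals `-ω_N`. -/
theorem stmt3 (N : ℕ) (hN : 0 < N) (τ : Fin N → ℝ) (hτ : StrictMono τ)
    (ωN : ℝ) (hω : 0 < ωN)
    (Ddag : Matrix (Fin N) (Fin N) ℝ) (hInv : IsUnit Ddag.det)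
    (hD : ∀ p : Polynomial ℝ, p.natDegree ≤ N - 1 → ∀ i : Fin N,
      Ddag.mulVec (fun j => p.eval (τ j)) i =
        (Polynomial.derivative p).eval (τ i) -
          (if (i : ℕ) = N - 1 then p.eval (τ i) / ωN else 0)) :
    (Ddag.mulVec (fun _ => (1 : ℝ)) =
      fun i : Fin N => if (i : ℕ) = N - 1 then -(1 / ωN) else 0) ∧
    (Ddag⁻¹.mulVec (fun i : Fin N => if (i : ℕ) = N - 1 then (1 : ℝ) else 0) =
      fun _ : Fin N => -ωN) :=
  stmt3_general N τ ωN hω Ddag hInv hD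
end

section
/- Let X be a Banach space, Y a normed linear space, F : X → 2^Y a set-valued map, and T : X → Y continuously Fréchet differentiable in the ball B_r(θ*) for some θ* ∈ X and r > 0. Assume: (C1) T(θ*) + δ ∈ F(θ*) for some δ ∈ Y; (C2) ‖∇T(θ) - ∇T(θ*)‖ ≤ ε for all θ ∈ B_r(θ*); (C3) the map (F - ∇T(θ*))^{-1} is single-valued and Lipschitz continuous with Lipschitz constant γ. If εγ < 1 and ‖δ‖ ≤ (1 - γε)r/γ, then there exists a unique θ ∈ B_r(θ*) such that T(θ) ∈ F(θ), and moreover ‖θ - θ*‖ ≤ γ‖δ‖/(1 - γε). -/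
/-!
Writing `T θ = (T θ - ∇T(θ*) θ) + ∇T(θ*) θ`, condition (C3) turns the inclusion `T θ ∈ F θ`
into the fixed-point equation `θ = Φ θ` with `Φ θ = G (T θ - ∇T(θ*) θ)`. By the mean value
theorem and (C2) the residual `T - ∇T(θ*)` is `ε`-Lipschitz on the ball, so `Φ` is a
`γε`-contraction there, and by (C1) it moves `θ*` by at most `γ‖δ‖ ≤ (1 - γε) r`. Hence `Φ`
maps the ball into itself and the Banach fixed-point theorem applies; its a priori estimate
gives the bound on `‖θ - θ*‖`.
-/

open Metric Set

theorem exists_unique_fixedPoint_mem_closedBall {α : Type*} [MetricSpace α] [CompleteSpace α]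
    {Φ : α → α} {K : NNReal} {x₀ : α} {r : ℝ} (hK : K < 1)
    (hΦ : LipschitzOnWith K Φ (closedBall x₀ r)) (hx₀ : dist (Φ x₀) x₀ ≤ (1 - K) * r) :
    ∃ x ∈ closedBall x₀ r, Φ x = x ∧ dist x x₀ ≤ dist (Φ x₀) x₀ / (1 - K) ∧
      ∀ y ∈ closedBall x₀ r, Φ y = y → y = x := by
  have hK' : (K : ℝ) < 1 := hK
  have hr : 0 ≤ r := nonneg_of_mul_nonneg_right (dist_nonneg.trans hx₀) (sub_pos.2 hK')
  have hx₀r : x₀ ∈ closedBall x₀ r := mem_closedBall_self hr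
  have hmaps : MapsTo Φ (closedBall x₀ r) (closedBall x₀ r) := fun x hx => by
    rw [mem_closedBall] at hx ⊢
    calc dist (Φ x) x₀ ≤ dist (Φ x) (Φ x₀) + dist (Φ x₀) x₀ := dist_triangle _ _ _
      _ ≤ K * r + (1 - K) * r := by
          gcongr
          exact (hΦ.dist_le_mul x (mem_closedBall.2 hx) x₀ hx₀r).trans (by gcongr)
      _ = r := by ring
  have : CompleteSpace (closedBall x₀ r) := isClosed_closedBall.completeSpace_coe
  have : Nonempty (closedBall x₀ r) := ⟨⟨x₀, hx₀r⟩⟩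
  have hf : ContractingWith K (hmaps.restrict Φ _ _) := ⟨hK, hΦ.mapsToRestrict hmaps⟩
  refine ⟨hf.fixedPoint, (hf.fixedPoint).2, congrArg Subtype.val hf.fixedPoint_isFixedPt,
    ?_, fun y hy hfix => congrArg Subtype.val (hf.fixedPoint_unique (x := ⟨y, hy⟩) ?_)⟩
  · rw [dist_comm, dist_comm (Φ x₀)]
    exact hf.dist_fixedPoint_le ⟨x₀, hx₀r⟩
  · exact Subtype.ext hfix

theorem Convex.lipschitzOnWith_sub_clm {E F : Type*} [NormedAddCommGroup E] [NormedSpace ℝ E]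
    [NormedAddCommGroup F] [NormedSpace ℝ F] {s : Set E} (hs : Convex ℝ s) {f : E → F}
    {f' : E → E →L[ℝ] F} (L : E →L[ℝ] F) {C : ℝ} (hf : ∀ x ∈ s, HasFDerivAt f (f' x) x)
    (hC : ∀ x ∈ s, ‖f' x - L‖ ≤ C) : LipschitzOnWith C.toNNReal (fun x => f x - L x) s :=
  LipschitzOnWith.of_dist_le' fun x hx y hy => by
    simpa only [dist_eq_norm] using hs.norm_image_sub_le_of_norm_hasFDerivWithin_le
      (f := fun x => f x - L x) (fun z hz => ((hf z hz).sub L.hasFDerivAt).hasFDerivWithinAt)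
      hC hy hx

theorem stmt10_general (X Y : Type*) [NormedAddCommGroup X] [NormedSpace ℝ X] [CompleteSpace X]
    [NormedAddCommGroup Y] [NormedSpace ℝ Y]
    (F : X → Set Y) (T : X → Y) (θs : X) (r : ℝ)
    (DT : X → X →L[ℝ] Y)
    (hderiv : ∀ θ ∈ closedBall θs r, HasFDerivAt T (DT θ) θ)
    (δ : Y) (ε γ : ℝ) (hγ : 0 < γ)
    (hC1 : T θs + δ ∈ F θs)
    (hC2 : ∀ θ ∈ closedBall θs r, ‖DT θ - DT θs‖ ≤ ε)
    (G : Y → X)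
    (hC3single : ∀ (y : Y) (x : X), (y + DT θs x ∈ F x) ↔ x = G y)
    (hC3lip : ∀ y₁ y₂ : Y, ‖G y₁ - G y₂‖ ≤ γ * ‖y₁ - y₂‖)
    (hεγ : ε * γ < 1) (hδ : ‖δ‖ ≤ (1 - γ * ε) * r / γ) :
    ∃ θ ∈ closedBall θs r, T θ ∈ F θ ∧
      ‖θ - θs‖ ≤ γ / (1 - γ * ε) * ‖δ‖ ∧
      ∀ θ' ∈ closedBall θs r, T θ' ∈ F θ' → θ' = θ := by
  have hγε : 0 < 1 - γ * ε := by linarith [mul_comm ε γ]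
  have hγδ : γ * ‖δ‖ ≤ (1 - γ * ε) * r := by rwa [le_div_iff₀ hγ, mul_comm] at hδ
  have hr : 0 ≤ r :=
    nonneg_of_mul_nonneg_right ((by positivity : 0 ≤ γ * ‖δ‖).trans hγδ) hγε
  have hε : 0 ≤ ε := (norm_nonneg _).trans (hC2 θs (mem_closedBall_self hr))
  set Φ : X → X := fun θ => G (T θ - DT θs θ)
  have hsol : ∀ θ, T θ ∈ F θ ↔ Φ θ = θ := fun θ => by
    simpa only [sub_add_cancel, eq_comm] using hC3single (T θ - DT θs θ) θ
  have hθs : G (T θs + δ - DT θs θs) = θs := by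
    rw [eq_comm, ← hC3single, sub_add_cancel]
    exact hC1
  have hΦθs : dist (Φ θs) θs ≤ γ * ‖δ‖ :=
    calc dist (Φ θs) θs = ‖G (T θs - DT θs θs) - G (T θs + δ - DT θs θs)‖ := by
          rw [hθs, dist_eq_norm]
      _ ≤ γ * ‖δ‖ := by simpa using hC3lip (T θs - DT θs θs) (T θs + δ - DT θs θs)
  have hΦ : LipschitzOnWith (γ.toNNReal * ε.toNNReal) Φ (closedBall θs r) :=
    (LipschitzWith.of_dist_le' fun y₁ y₂ => by simpa only [dist_eq_norm] using hC3lip y₁ y₂)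
      |>.comp_lipschitzOnWith ((convex_closedBall θs r).lipschitzOnWith_sub_clm _ hderiv hC2)
  have hK : ((γ.toNNReal * ε.toNNReal : NNReal) : ℝ) = γ * ε := by
    rw [NNReal.coe_mul, Real.coe_toNNReal _ hγ.le, Real.coe_toNNReal _ hε]
  obtain ⟨θ, hθ, hfix, hdist, huniq⟩ := exists_unique_fixedPoint_mem_closedBall
    (by rw [← NNReal.coe_lt_coe, hK, NNReal.coe_one]; linarith) hΦ (by rw [hK]; linarith)
  rw [hK] at hdist
  refine ⟨θ, hθ, (hsol θ).2 hfix, ?_, fun θ' hθ' h => huniq θ' hθ' ((hsol θ').1 h)⟩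
  calc ‖θ - θs‖ = dist θ θs := (dist_eq_norm _ _).symm
    _ ≤ γ * ‖δ‖ / (1 - γ * ε) := hdist.trans (div_le_div_of_nonneg_right hΦθs hγε.le)
    _ = γ / (1 - γ * ε) * ‖δ‖ := by ring

/-- Abstract implicit-function-type result (Dontchev–Hager): if the residual `δ` is small,
the derivative varies by at most `ε` on the ball, and the linearized inclusion has a
single-valued Lipschitz inverse with constant `γ` satisfying `εγ < 1`, then the inclusion
`T(θ) ∈ F(θ)` has a unique solution in the ball `B_r(θ*)`, with
`‖θ - θ*‖ ≤ γ‖δ‖/(1 - γε)`. -/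
theorem stmt10 (X Y : Type*) [NormedAddCommGroup X] [NormedSpace ℝ X] [CompleteSpace X]
    [NormedAddCommGroup Y] [NormedSpace ℝ Y]
    (F : X → Set Y) (T : X → Y) (θs : X) (r : ℝ) (hr : 0 < r)
    (DT : X → X →L[ℝ] Y)
    (hderiv : ∀ θ ∈ closedBall θs r, HasFDerivAt T (DT θ) θ)
    (hcont : ContinuousOn DT (closedBall θs r))
    (δ : Y) (ε γ : ℝ) (hγ : 0 < γ) (hε : 0 ≤ ε)
    (hC1 : T θs + δ ∈ F θs)
    (hC2 : ∀ θ ∈ closedBall θs r, ‖DT θ - DT θs‖ ≤ ε)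
    (G : Y → X)
    (hC3single : ∀ (y : Y) (x : X), (y + DT θs x ∈ F x) ↔ x = G y)
    (hC3lip : ∀ y₁ y₂ : Y, ‖G y₁ - G y₂‖ ≤ γ * ‖y₁ - y₂‖)
    (hεγ : ε * γ < 1) (hδ : ‖δ‖ ≤ (1 - γ * ε) * r / γ) :
    ∃ θ ∈ closedBall θs r, T θ ∈ F θ ∧
      ‖θ - θs‖ ≤ γ / (1 - γ * ε) * ‖δ‖ ∧
      ∀ θ' ∈ closedBall θs r, T θ' ∈ F θ' → θ' = θ :=
  stmt10_general X Y F T θs r DT hderiv δ ε γ hγ hC1 hC2 G hC3single hC3lip hεγ hδ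
end
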